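/- Let K(k) = ∫₀¹ dt/√((1-t²)(1-k²t²)) for k ∈ (0,1) and K'(k) = K(√(1-k²)). Then |6·K(1/3)/K'(1/3) - 3.83778471351302| ≤ 9.40×10⁻¹⁵. -/

import Mathlib

open intervalIntegral

/-- The complete elliptic integral of the first kind,
`K(k) = ∫₀¹ dt/√((1-t²)(1-k²t²))`. -/
noncomputable def ellK (k : ℝ) : ℝ :=
  ∫ t in (0:ℝ)..1, 1 / Real.sqrt ((1 - t ^ 2) * (1 - k ^ 2 * t ^ 2))

/-- The complementary complete elliptic integral, `K'(k) = K(√(1-k²))`. -/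
noncomputable def ellK' (k : ℝ) : ℝ := ellK (Real.sqrt (1 - k ^ 2))

/-!
Landen's transformation `K(2√k/(1+k)) = (1+k) K(k)` at `k = 1/2` gives
`K'(1/3) = K(√8/3) = (3/2) K(1/2)`, so the quantity is `4 K(1/3) / K(1/2)`.
Substituting `t = sin θ`, expanding `(1 - k² sin² θ)^(-1/2)` in its binomial series and
integrating termwise with Wallis' formula `∫₀^{π/2} sin^{2n} θ dθ = (π/2) cₙ` gives
`K(k) = (π/2) ∑ cₙ² k^{2n}` with `cₙ = ∏_{i<n} (2i+1)/(2i+2) ≤ 1`. So 26 terms of each series,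
with the tails bounded by geometric series, pin down `K(1/3)` and `K(1/2)` well enough.
-/

open Real Set Finset MeasureTheory Filter

theorem integral_deriv_mul_comp_of_deriv_nonneg {φ φ' g : ℝ → ℝ} {a b : ℝ} (hab : a ≤ b)
    (hφ : ContinuousOn φ (Icc a b)) (hφφ' : ∀ x ∈ Ioo a b, HasDerivAt φ (φ' x) x)
    (hφ' : ∀ x ∈ Ioo a b, 0 ≤ φ' x) :
    ∫ x in a..b, φ' x * g (φ x) = ∫ t in φ a..φ b, g t := by
  have hmono : MonotoneOn φ (Icc a b) := by
    refine monotoneOn_of_deriv_nonneg (convex_Icc a b) hφ (fun x hx => ?_) (fun x hx => ?_) <;>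
      rw [interior_Icc] at hx
    · exact (hφφ' x hx).differentiableAt.differentiableWithinAt
    · exact (hφφ' x hx).deriv ▸ hφ' x hx
  rw [integral_of_le hab, integral_of_le (hmono ⟨le_rfl, hab⟩ ⟨hab, le_rfl⟩ hab),
    ← integral_Icc_eq_integral_Ioc, ← integral_Icc_eq_integral_Ioc]
  exact integral_Icc_deriv_smul_of_deriv_nonneg hφ hφφ' hφ' hab

theorem ellK_eq_integral_sin (k : ℝ) :
    ellK k = ∫ θ in (0:ℝ)..π / 2, 1 / √(1 - k ^ 2 * sin θ ^ 2) := by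
  have h := integral_deriv_mul_comp_of_deriv_nonneg
    (g := fun t => 1 / √((1 - t ^ 2) * (1 - k ^ 2 * t ^ 2)))
    (by positivity) continuous_sin.continuousOn (fun x _ => hasDerivAt_sin x)
    (fun x hx => (cos_pos_of_mem_Ioo ⟨by linarith [hx.1, pi_pos], hx.2⟩).le)
  rw [sin_zero, sin_pi_div_two] at h
  rw [ellK, ← h]
  refine integral_congr_Ioo_of_le (by positivity) fun θ hθ => ?_
  have hcos : 0 < cos θ := cos_pos_of_mem_Ioo ⟨by linarith [hθ.1, pi_pos], hθ.2⟩
  rw [← cos_sq', sqrt_mul (sq_nonneg _), sqrt_sq hcos.le]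
  field_simp

noncomputable def landenMap (k t : ℝ) : ℝ := (1 + k) * t / (1 + k * t ^ 2)

theorem hasDerivAt_landenMap {k : ℝ} (hk : 0 ≤ k) (x : ℝ) :
    HasDerivAt (landenMap k) ((1 + k) * (1 - k * x ^ 2) / (1 + k * x ^ 2) ^ 2) x := by
  have hnum := (hasDerivAt_id' x).const_mul (1 + k)
  have hden := ((hasDerivAt_pow 2 x).const_mul k).const_add 1
  exact (hnum.div hden (by positivity)).congr_deriv (by ring)

theorem landenMap_deriv_mul_integrand {k x : ℝ} (hk0 : 0 ≤ k) (hk1 : k < 1) (hx0 : 0 < x)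
    (hx1 : x < 1) :
    (1 + k) * (1 - k * x ^ 2) / (1 + k * x ^ 2) ^ 2 *
      (1 / √((1 - landenMap k x ^ 2) * (1 - (2 * √k / (1 + k)) ^ 2 * landenMap k x ^ 2)))
      = (1 + k) * (1 / √((1 - x ^ 2) * (1 - k ^ 2 * x ^ 2))) := by
  have hd : 0 < 1 + k * x ^ 2 := by positivity
  have hkx : 0 < 1 - k * x ^ 2 := by nlinarith
  have hP : 0 < (1 - x ^ 2) * (1 - k ^ 2 * x ^ 2) := by
    have : k ^ 2 * x ^ 2 < 1 := by nlinarith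
    have : x ^ 2 < 1 := by nlinarith
    positivity
  have hm : (2 * √k / (1 + k)) ^ 2 = 4 * k / (1 + k) ^ 2 := by
    rw [div_pow, mul_pow, sq_sqrt hk0]
    ring
  have hmodulus : (1 - landenMap k x ^ 2) * (1 - (2 * √k / (1 + k)) ^ 2 * landenMap k x ^ 2)
      = (1 - x ^ 2) * (1 - k ^ 2 * x ^ 2) * ((1 - k * x ^ 2) / (1 + k * x ^ 2) ^ 2) ^ 2 := by
    rw [hm, landenMap]
    field_simp
    ring
  rw [hmodulus, sqrt_mul' _ (sq_nonneg _), sqrt_sq (by positivity)]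
  have := sqrt_pos.2 hP
  field_simp

theorem ellK_landen {k : ℝ} (hk0 : 0 ≤ k) (hk1 : k < 1) :
    ellK (2 * √k / (1 + k)) = (1 + k) * ellK k := by
  have h := integral_deriv_mul_comp_of_deriv_nonneg
    (g := fun t => 1 / √((1 - t ^ 2) * (1 - (2 * √k / (1 + k)) ^ 2 * t ^ 2))) zero_le_one
    (fun x _ => (hasDerivAt_landenMap hk0 x).continuousAt.continuousWithinAt)
    (fun x _ => hasDerivAt_landenMap hk0 x)
    (fun x hx => by
      have : k * x ^ 2 ≤ 1 := by nlinarith [hx.1, hx.2]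
      positivity)
  have hφ0 : landenMap k 0 = 0 := by simp [landenMap]
  have hφ1 : landenMap k 1 = 1 := by simp only [landenMap]; field_simp
  rw [hφ0, hφ1] at h
  rw [ellK, ← h, ellK, ← intervalIntegral.integral_const_mul]
  exact integral_congr_Ioo_of_le zero_le_one fun x hx =>
    landenMap_deriv_mul_integrand hk0 hk1 hx.1 hx.2

theorem ellK'_one_third : ellK' (1 / 3) = 3 / 2 * ellK (1 / 2) := by
  have hmodulus : √(1 - (1 / 3 : ℝ) ^ 2) = 2 * √(1 / 2) / (1 + 1 / 2) := by
    rw [show (1 - (1 / 3 : ℝ) ^ 2) = (4 / 3) ^ 2 * (1 / 2) by norm_num,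
      sqrt_mul (by norm_num), sqrt_sq (by norm_num)]
    ring
  rw [ellK', hmodulus, ellK_landen (by norm_num) (by norm_num)]
  norm_num

noncomputable def wallisCoeff (n : ℕ) : ℝ := ∏ i ∈ range n, (2 * (i : ℝ) + 1) / (2 * i + 2)

theorem wallisCoeff_succ (n : ℕ) :
    wallisCoeff (n + 1) = wallisCoeff n * ((2 * n + 1) / (2 * n + 2)) :=
  prod_range_succ _ _

theorem wallisCoeff_nonneg (n : ℕ) : 0 ≤ wallisCoeff n :=
  prod_nonneg fun i _ => by positivity

theorem wallisCoeff_le_one (n : ℕ) : wallisCoeff n ≤ 1 :=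
  prod_le_one (fun i _ => by positivity) fun i _ => (div_le_one (by positivity)).2 (by linarith)

theorem ascPochhammer_eval_half_div_factorial (n : ℕ) :
    (ascPochhammer ℝ n).eval (1 / 2) / n.factorial = wallisCoeff n := by
  induction n with
  | zero => simp [wallisCoeff]
  | succ n ih =>
    rw [ascPochhammer_succ_eval, Nat.factorial_succ, wallisCoeff_succ, ← ih]
    push_cast
    field_simp
    ring

theorem ring_choose_eq_wallisCoeff (n : ℕ) :
    Ring.choose ((1 / 2 : ℝ) + n - 1) n = wallisCoeff n := by
  rw [Ring.choose_eq_smul, Polynomial.descPochhammer_smeval_eq_ascPochhammer,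
    Polynomial.ascPochhammer_smeval_eq_eval, ← ascPochhammer_eval_half_div_factorial, smul_eq_mul,
    inv_mul_eq_div]
  ring_nf

theorem integral_sin_pow_even_zero_pi_div_two (n : ℕ) :
    ∫ x in (0:ℝ)..π / 2, sin x ^ (2 * n) = π / 2 * wallisCoeff n := by
  induction n with
  | zero => simp [wallisCoeff]
  | succ n ih =>
    rw [mul_add, mul_one, integral_sin_pow, ih, wallisCoeff_succ, sin_zero, cos_pi_div_two,
      zero_pow (Nat.succ_ne_zero _), zero_mul, mul_zero, sub_self, zero_div, zero_add]
    push_cast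
    ring

theorem hasSum_wallisCoeff_mul_pow {x : ℝ} (hx : |x| < 1) :
    HasSum (fun n => wallisCoeff n * x ^ n) (1 / √(1 - x)) := by
  have h := (one_div_one_sub_rpow_hasFPowerSeriesOnBall_zero (1 / 2)).hasSum (y := x)
    (by rw [Metric.mem_eball, edist_zero_right, enorm_eq_nnnorm, ENNReal.coe_lt_one_iff,
      ← NNReal.coe_lt_coe, coe_nnnorm]; simpa using hx)
  simp only [FormalMultilinearSeries.ofScalars_apply_eq, ring_choose_eq_wallisCoeff, zero_add,
    smul_eq_mul] at h
  rwa [sqrt_eq_rpow]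

theorem hasSum_ellK {k : ℝ} (hk : |k| < 1) :
    HasSum (fun n => π / 2 * (wallisCoeff n ^ 2 * (k ^ 2) ^ n)) (ellK k) := by
  have hk2 : k ^ 2 < 1 := (sq_lt_one_iff_abs_lt_one k).2 hk
  have hle (θ : ℝ) : k ^ 2 * sin θ ^ 2 ≤ k ^ 2 :=
    mul_le_of_le_one_right (sq_nonneg k) (sin_sq_le_one θ)
  have hint (n : ℕ) : ∫ θ in (0:ℝ)..π / 2, wallisCoeff n * (k ^ 2 * sin θ ^ 2) ^ n
      = π / 2 * (wallisCoeff n ^ 2 * (k ^ 2) ^ n) := by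
    simp_rw [mul_pow, ← pow_mul, intervalIntegral.integral_const_mul,
      integral_sin_pow_even_zero_pi_div_two]
    ring
  rw [ellK_eq_integral_sin, ← funext hint]
  refine hasSum_integral_of_dominated_convergence (fun n _ => (k ^ 2) ^ n)
    (fun n => by fun_prop) (fun n => ae_of_all _ fun θ _ => ?_)
    (ae_of_all _ fun θ _ => summable_geometric_of_lt_one (sq_nonneg k) hk2)
    intervalIntegrable_const (ae_of_all _ fun θ _ => hasSum_wallisCoeff_mul_pow ?_)
  · rw [norm_mul, norm_of_nonneg (wallisCoeff_nonneg n), norm_of_nonneg (by positivity)]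
    calc wallisCoeff n * (k ^ 2 * sin θ ^ 2) ^ n ≤ (k ^ 2 * sin θ ^ 2) ^ n :=
          mul_le_of_le_one_left (by positivity) (wallisCoeff_le_one n)
      _ ≤ (k ^ 2) ^ n := pow_le_pow_left₀ (by positivity) (hle θ) n
  · rw [abs_of_nonneg (by positivity)]
    exact (hle θ).trans_lt hk2

noncomputable def ellKPartialSum (N : ℕ) (k : ℝ) : ℝ :=
  ∑ n ∈ range N, wallisCoeff n ^ 2 * (k ^ 2) ^ n

theorem ellK_mem_Icc_ellKPartialSum {k : ℝ} (hk : |k| < 1) (N : ℕ) :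
    ellK k ∈ Icc (π / 2 * ellKPartialSum N k)
      (π / 2 * (ellKPartialSum N k + (k ^ 2) ^ N / (1 - k ^ 2))) := by
  have hk2 : k ^ 2 < 1 := (sq_lt_one_iff_abs_lt_one k).2 hk
  have hsum := hasSum_ellK hk
  rw [ellKPartialSum, mul_sum]
  refine ⟨sum_le_hasSum _ (fun n _ => by positivity) hsum, ?_⟩
  have htail := (hasSum_nat_add_iff' N).2 hsum
  have hgeom : HasSum (fun n => π / 2 * (k ^ 2) ^ (n + N))
      (π / 2 * ((k ^ 2) ^ N / (1 - k ^ 2))) := by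
    simp_rw [pow_add, mul_comm _ ((k ^ 2) ^ N), div_eq_mul_inv, ← mul_assoc]
    exact (hasSum_geometric_of_lt_one (sq_nonneg k) hk2).mul_left _
  have htail_le := hasSum_le (fun n => mul_le_mul_of_nonneg_left
    (mul_le_of_le_one_left (by positivity) (pow_le_one₀ (wallisCoeff_nonneg _)
      (wallisCoeff_le_one _))) pi_div_two_pos.le) htail hgeom
  rw [mul_add, mul_sum]
  linarith

theorem abs_div_sub_le_of_mem_Icc {p x y a b c d r ε : ℝ} (hp : 0 < p) (ha : 0 ≤ a) (hc : 0 < c)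
    (hx : x ∈ Icc (p * a) (p * b)) (hy : y ∈ Icc (p * c) (p * d))
    (hlo : r - ε ≤ a / d) (hhi : b / c ≤ r + ε) : |x / y - r| ≤ ε := by
  have hpc : 0 < p * c := by positivity
  have hx0 : 0 ≤ x := (by positivity : 0 ≤ p * a).trans hx.1
  have hlower : a / d ≤ x / y := calc
    a / d = p * a / (p * d) := (mul_div_mul_left a d hp.ne').symm
    _ ≤ x / y := div_le_div₀ hx0 hx.1 (hpc.trans_le hy.1) hy.2
  have hupper : x / y ≤ b / c := calc
    x / y ≤ p * b / (p * c) := div_le_div₀ (hx0.trans hx.2) hx.2 hpc hy.1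
    _ = b / c := mul_div_mul_left b c hp.ne'
  rw [abs_le]
  constructor <;> linarith

/-- The extremal length of a hexagon curve on the cube punctured at its vertices,
`6 (K/K')(1/3)`, lies within `9.40 × 10⁻¹⁵` of `3.83778471351302`. -/
theorem hexagon_curve_extremal_length :
    |6 * ellK (1/3) / ellK' (1/3) - 3.83778471351302| ≤ 9.40e-15 := by
  have hK₁ := ellK_mem_Icc_ellKPartialSum (k := 1 / 3) (by norm_num) 26
  have hK₂ := ellK_mem_Icc_ellKPartialSum (k := 1 / 2) (by norm_num) 26
  have h4K₁ : 4 * ellK (1 / 3) ∈ Icc (π / 2 * (4 * ellKPartialSum 26 (1 / 3)))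
      (π / 2 * (4 * (ellKPartialSum 26 (1 / 3) + ((1 / 3) ^ 2) ^ 26 / (1 - (1 / 3) ^ 2)))) :=
    ⟨by linarith [hK₁.1], by linarith [hK₁.2]⟩
  rw [ellK'_one_third, show 6 * ellK (1 / 3) / (3 / 2 * ellK (1 / 2))
    = 4 * ellK (1 / 3) / ellK (1 / 2) by ring]
  refine abs_div_sub_le_of_mem_Icc pi_div_two_pos ?_ ?_ h4K₁ hK₂ ?_ ?_ <;>
    norm_num [ellKPartialSum, wallisCoeff, sum_range_succ, prod_range_succ]
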